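/- arXiv:math/0305052 — 2 statements merged into one kernel-verified Lean document; each statement's English description precedes it below -/
import Mathlib

section
/- Let A be a unital complex Banach algebra and f, i ∈ A. Let M = T(f,i) = ![![f, 0], ![i, f]] in Matrix (Fin 2) (Fin 2) A. Then the matrix exponential of M is exp(M) = ![![exp f, 0], ![x, exp f]], where x = ∑'_{n : ℕ} ((n+1)! : ℂ)⁻¹ • (∑_{k=0}^{n} f^k * i * f^{n−k}). (Equivalently, x = ∑_{n ≥ 1} (1/n!) ∑_{k+l=n−1} f^k · i · f^l.) -/
/-!
The lower-left entry of `T f i ^ n` is `∑_{k<n} f^k i f^(n-1-k)`, so the exponential series of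
`T f i`, which converges in the operator norm on matrices, can be summed entrywise: the diagonal
gives `exp f`, and the lower-left entry gives the stated series after shifting the index by one
(the `n = 0` term vanishes).
-/

open NormedSpace

/-- For `a b : A`, `T a b` is the 2×2 matrix `![![a, 0], ![b, a]]`. -/
def T {A : Type*} [Ring A] (a b : A) : Matrix (Fin 2) (Fin 2) A :=
  ![![a, 0], ![b, a]]

section Algebra

variable {A : Type*} [Ring A]

lemma T_mul (a b c d : A) : T a b * T c d = T (a * c) (b * c + a * d) := by
  ext x y
  fin_cases x <;> fin_cases y <;> simp [Matrix.mul_apply, Fin.sum_univ_two] <;> simp [T]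

lemma T_smul {R : Type*} [SMulZeroClass R A] (r : R) (a b : A) :
    r • T a b = T (r • a) (r • b) := by
  ext x y
  fin_cases x <;> fin_cases y <;> simp [Matrix.smul_apply] <;> simp [T]

lemma T_one : T (1 : A) 0 = 1 := by
  ext x y
  fin_cases x <;> fin_cases y <;> simp [T]

lemma T_pow (f i : A) (n : ℕ) :
    T f i ^ n = T (f ^ n) (∑ k ∈ Finset.range n, f ^ k * i * f ^ (n - 1 - k)) := by
  induction n with
  | zero => simp [T_one]
  | succ n ih =>
    have shift : (∑ k ∈ Finset.range n, f ^ k * i * f ^ (n - 1 - k)) * f =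
        ∑ k ∈ Finset.range n, f ^ k * i * f ^ (n - k) := by
      rw [Finset.sum_mul]
      refine Finset.sum_congr rfl fun k hk => ?_
      have hexponent : n - 1 - k + 1 = n - k := by grind
      rw [mul_assoc, ← pow_succ, hexponent]
    rw [pow_succ, ih, T_mul, ← pow_succ, shift, Finset.sum_range_succ]
    simp

end Algebra

lemma hasSum_T_iff {A ι : Type*} [Ring A] [TopologicalSpace A] {a b : ι → A} {x y : A} :
    HasSum (fun n => T (a n) (b n)) (T x y) ↔ HasSum a x ∧ HasSum b y := by
  refine Pi.hasSum.trans ?_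
  simp only [T, Pi.hasSum, Matrix.cons_val', Matrix.cons_val_fin_one, Fin.forall_fin_two,
    Fin.isValue, Matrix.cons_val_zero, Matrix.cons_val_one, hasSum_zero, and_true,
    and_congr_right_iff, and_iff_left_iff_imp]
  tauto

/- The operator norm induces the product uniformity on matrices, but not reducibly, so the
completeness instance has to be supplied by hand. -/
theorem Matrix.exp_series_hasSum_exp' {𝕂 m 𝔸 : Type*} [RCLike 𝕂] [Fintype m] [DecidableEq m]
    [NormedRing 𝔸] [NormedAlgebra 𝕂 𝔸] [CompleteSpace 𝔸] (M : Matrix m m 𝔸) :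
    HasSum (fun n => (n.factorial⁻¹ : 𝕂) • M ^ n) (exp M) :=
  open scoped Matrix.Norms.Operator in
  @NormedSpace.exp_series_hasSum_exp' 𝕂 _ _ _ _ _ _
    (inferInstanceAs (CompleteSpace (Matrix m m 𝔸))) M

/-- In a unital complex Banach algebra `A`, the exponential of the matrix
`M = T f i = ![![f, 0], ![i, f]]` is `![![exp f, 0], ![x, exp f]]` where
`x = ∑'_{n} ((n+1)!)⁻¹ • (∑_{k=0}^{n} f^k * i * f^(n-k))`. -/
theorem stmt3 {A : Type*} [NormedRing A] [NormedAlgebra ℂ A] [CompleteSpace A]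
    (f i : A) :
    exp (T f i) =
      T (exp f)
        (∑' n : ℕ, (((n + 1).factorial : ℂ))⁻¹ •
          ∑ k ∈ Finset.range (n + 1), f ^ k * i * f ^ (n - k)) := by
  have hexp := Matrix.exp_series_hasSum_exp' (𝕂 := ℂ) (T f i)
  simp only [T_pow, T_smul] at hexp
  have hlower : HasSum (fun n : ℕ => (n.factorial⁻¹ : ℂ) •
      ∑ k ∈ Finset.range n, f ^ k * i * f ^ (n - 1 - k)) (exp (T f i) 1 0) := by
    simpa [T] using Pi.hasSum.mp (Pi.hasSum.mp hexp 1) 0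
  have hT : exp (T f i) = T (exp f) (exp (T f i) 1 0) :=
    hexp.unique (hasSum_T_iff.mpr ⟨exp_series_hasSum_exp' f, hlower⟩)
  have hshift : HasSum (fun n : ℕ => ((n + 1).factorial⁻¹ : ℂ) •
      ∑ k ∈ Finset.range (n + 1), f ^ k * i * f ^ (n - k)) (exp (T f i) 1 0) := by
    simpa using (hasSum_nat_add_iff' 1).mpr hlower
  rw [hT, hshift.tsum_eq]
end

section
/- Let A be a unital complex Banach algebra and f, i ∈ A. Then (∑'_{n : ℕ} ((n+1)! : ℂ)⁻¹ • (∑_{k=0}^{n} f^k * i * f^{n−k})) * exp(−f) = ∑'_{l : ℕ} ((l+1)! : ℂ)⁻¹ • (ad f)^[l] i, where (ad f)^[l] is the l-th iterate of the map x ↦ f*x − x*f. (This identity relates the lower-left entry x of exp(T(f,i)) from the paper's Example to the homotopy ρ = −∑_l (1/(l+1)!)·δ_f^l(i) used in the proof of the main theorem.) -/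
/-!
Write `L` and `R` for left and right multiplication by `f`; they commute and `ad f = L - R`.
Formally the left side is `φ(L, R) i` with `φ(x, y) = (eˣ - eʸ) / (x - y) · e⁻ʸ = (eˣ⁻ʸ - 1) / (x - y)`,
which is the right side. Concretely, comparing the coefficients of `f ^ k * i * f ^ q` in the
Cauchy product of the two absolutely convergent series reduces the identity to the partial
alternating binomial sum `∑_{m ≤ q} (-1) ^ m C(k + q + 1, m) = (-1) ^ q C(k + q, q)`.
-/

open NormedSpace Finset
open scoped Nat

theorem sum_antidiagonal_sum_antidiagonal_fst {M : Type*} [AddCommMonoid M]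
    (F : ℕ → ℕ → ℕ → ℕ → M) (N : ℕ) :
    ∑ p ∈ antidiagonal N, ∑ r ∈ antidiagonal p.1, F p.1 r.1 r.2 p.2 =
      ∑ p ∈ antidiagonal N, ∑ r ∈ antidiagonal p.2, F (p.1 + r.1) p.1 r.1 r.2 := by
  simp only [sum_sigma']
  apply sum_nbij' (fun ⟨⟨_n, m⟩, ⟨k, j⟩⟩ ↦ ⟨(k, j + m), (j, m)⟩)
    (fun ⟨⟨k, _q⟩, ⟨j, m⟩⟩ ↦ ⟨(k + j, m), (k, j)⟩) <;> aesop (add simp [add_assoc])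

theorem iterate_mul_sub_mul_eq_sum_antidiagonal {A : Type*} [Ring A] (f i : A) (N : ℕ) :
    (fun x => f * x - x * f)^[N] i =
      ∑ p ∈ antidiagonal N, N.choose p.1 • (f ^ p.1 * i * (-f) ^ p.2) := by
  have hcomm : Commute (LinearMap.mulLeft ℕ f) (LinearMap.mulRight ℕ (-f)) :=
    LinearMap.ext fun x => (mul_assoc f x (-f)).symm
  have had : (fun x => f * x - x * f) = ⇑(LinearMap.mulLeft ℕ f + LinearMap.mulRight ℕ (-f)) := by
    funext x; simp [sub_eq_add_neg]
  rw [had, ← Module.End.pow_apply, hcomm.add_pow', LinearMap.sum_apply]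
  simp [LinearMap.pow_mulLeft, LinearMap.pow_mulRight, mul_assoc]

theorem sum_antidiagonal_neg_one_pow_mul_inv_factorial {𝕂 : Type*} [Field 𝕂] [CharZero 𝕂]
    (k q : ℕ) :
    ∑ p ∈ antidiagonal q, (-1 : 𝕂) ^ p.2 * (((k + p.1 + 1)! : 𝕂)⁻¹ * (p.2 ! : 𝕂)⁻¹) =
      (-1) ^ q * (k + q).choose k * ((k + q + 1)! : 𝕂)⁻¹ := by
  have hterm : ∀ p ∈ antidiagonal q,
      (-1 : 𝕂) ^ p.2 * (((k + p.1 + 1)! : 𝕂)⁻¹ * (p.2 ! : 𝕂)⁻¹) =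
        ((-1) ^ p.2 * (k + q + 1).choose p.2 : ℤ) * ((k + q + 1)! : 𝕂)⁻¹ := by
    rintro ⟨j, m⟩ h
    rw [HasAntidiagonal.mem_antidiagonal] at h
    have hchoose := Nat.cast_add_choose 𝕂 (a := m) (b := k + j + 1)
    rw [show m + (k + j + 1) = k + q + 1 by omega] at hchoose
    have hfac : ((k + q + 1)! : 𝕂) ≠ 0 := Nat.cast_ne_zero.2 (Nat.factorial_ne_zero _)
    push_cast
    rw [hchoose]
    field_simp
  rw [sum_congr rfl hterm, ← sum_mul, ← Nat.sum_antidiagonal_swap]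
  simp only [Prod.snd_swap]
  rw [Nat.sum_antidiagonal_eq_sum_range_succ_mk, ← Int.cast_sum,
    Int.alternating_sum_range_choose_eq_choose, Nat.choose_symm_add]
  push_cast
  ring

theorem norm_pow_mul_le {A : Type*} [NormedRing A] (f x : A) (n : ℕ) :
    ‖f ^ n * x‖ ≤ ‖f‖ ^ n * ‖x‖ := by
  induction n with
  | zero => simp
  | succ n ih =>
    rw [pow_succ', mul_assoc, pow_succ', mul_assoc]
    exact (norm_mul_le _ _).trans (by gcongr)

theorem norm_mul_pow_le {A : Type*} [NormedRing A] (x f : A) (n : ℕ) :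
    ‖x * f ^ n‖ ≤ ‖x‖ * ‖f‖ ^ n := by
  induction n with
  | zero => simp
  | succ n ih =>
    rw [pow_succ, ← mul_assoc, pow_succ, ← mul_assoc]
    exact (norm_mul_le _ _).trans (by gcongr)

theorem summable_norm_inv_factorial_smul_sum_pow_mul_pow {𝕂 A : Type*} [RCLike 𝕂] [NormedRing A]
    [NormedAlgebra 𝕂 A] (f i : A) :
    Summable fun n : ℕ => ‖(((n + 1)! : 𝕂))⁻¹ • ∑ k ∈ range (n + 1), f ^ k * i * f ^ (n - k)‖ := by
  refine .of_nonneg_of_le (fun n => norm_nonneg _) (fun n => ?_)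
    ((Real.summable_pow_div_factorial ‖f‖).mul_left ‖i‖)
  have hterm : ∀ k ∈ range (n + 1), ‖f ^ k * i * f ^ (n - k)‖ ≤ ‖i‖ * ‖f‖ ^ n := by
    intro k hk
    have hkn : k + (n - k) = n := Nat.add_sub_cancel' (Nat.le_of_lt_succ (mem_range.1 hk))
    calc ‖f ^ k * i * f ^ (n - k)‖ ≤ ‖f‖ ^ k * ‖i‖ * ‖f‖ ^ (n - k) :=
          (norm_mul_pow_le _ _ _).trans (by gcongr; exact norm_pow_mul_le _ _ _)
      _ = ‖i‖ * ‖f‖ ^ n := by rw [mul_right_comm, ← pow_add, hkn, mul_comm]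
  calc ‖(((n + 1)! : 𝕂))⁻¹ • ∑ k ∈ range (n + 1), f ^ k * i * f ^ (n - k)‖
      ≤ ((n + 1)! : ℝ)⁻¹ * ((n + 1) * (‖i‖ * ‖f‖ ^ n)) := by
        rw [norm_smul, norm_inv, RCLike.norm_natCast]
        gcongr
        simpa using norm_sum_le_of_le _ hterm
    _ = ‖i‖ * (‖f‖ ^ n / n !) := by
        rw [Nat.factorial_succ]
        push_cast
        field_simp

theorem sum_antidiagonal_eq_inv_factorial_smul_iterate_mul_sub_mul {𝕂 A : Type*} [Field 𝕂]
    [CharZero 𝕂] [Ring A] [Algebra 𝕂 A] (f i : A) (N : ℕ) :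
    ∑ p ∈ antidiagonal N, ((((p.1 + 1)! : 𝕂))⁻¹ •
        ∑ k ∈ range (p.1 + 1), f ^ k * i * f ^ (p.1 - k)) * (((p.2 ! : 𝕂))⁻¹ • (-f) ^ p.2) =
      (((N + 1)! : 𝕂))⁻¹ • (fun x => f * x - x * f)^[N] i := by
  have hneg : ∀ m : ℕ, (-f) ^ m = (-1 : 𝕂) ^ m • f ^ m := fun m => by
    rw [← neg_one_smul 𝕂 f, smul_pow]
  have hrange : ∀ n : ℕ, ∑ k ∈ range (n + 1), f ^ k * i * f ^ (n - k) =
      ∑ p ∈ antidiagonal n, f ^ p.1 * i * f ^ p.2 := fun n =>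
    (Nat.sum_antidiagonal_eq_sum_range_succ (fun k j => f ^ k * i * f ^ j) n).symm
  simp only [iterate_mul_sub_mul_eq_sum_antidiagonal, hrange, hneg, smul_sum, sum_mul,
    smul_mul_smul_comm]
  rw [sum_antidiagonal_sum_antidiagonal_fst
    (fun n k j m => (((n + 1)! : 𝕂)⁻¹ * (m ! : 𝕂)⁻¹) • (f ^ k * i * f ^ j * ((-1 : 𝕂) ^ m • f ^ m)))]
  refine sum_congr rfl fun ⟨k, q⟩ hkq => ?_
  rw [HasAntidiagonal.mem_antidiagonal] at hkq
  subst hkq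
  have hterm : ∀ r ∈ antidiagonal q,
      (((k + r.1 + 1)! : 𝕂)⁻¹ * (r.2 ! : 𝕂)⁻¹) • (f ^ k * i * f ^ r.1 * ((-1 : 𝕂) ^ r.2 • f ^ r.2)) =
        ((-1 : 𝕂) ^ r.2 * (((k + r.1 + 1)! : 𝕂)⁻¹ * (r.2 ! : 𝕂)⁻¹)) • (f ^ k * i * f ^ q) := by
    rintro ⟨j, m⟩ hjm
    rw [HasAntidiagonal.mem_antidiagonal] at hjm
    dsimp only at hjm ⊢
    rw [mul_smul_comm, smul_smul, mul_assoc (f ^ k * i), ← pow_add, hjm, mul_comm]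
  dsimp only
  rw [sum_congr rfl hterm, ← sum_smul, sum_antidiagonal_neg_one_pow_mul_inv_factorial,
    ← Nat.cast_smul_eq_nsmul 𝕂, smul_smul, mul_smul_comm, smul_smul]
  congr 1
  ring

/-- In a unital complex Banach algebra,
`(∑'_{n} ((n+1)!)⁻¹ • ∑_{k=0}^{n} f^k * i * f^(n-k)) * exp (-f)
  = ∑'_{l} ((l+1)!)⁻¹ • (ad f)^[l] i`,
relating the lower-left entry of `exp (T f i)` to the homotopy
`ρ = -∑_l (1/(l+1)!) • δ_f^l i`. -/
theorem stmt7 {A : Type*} [NormedRing A] [NormedAlgebra ℂ A] [CompleteSpace A]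
    (f i : A) :
    (∑' n : ℕ, (((n + 1).factorial : ℂ))⁻¹ •
        ∑ k ∈ Finset.range (n + 1), f ^ k * i * f ^ (n - k)) * exp (-f) =
      ∑' l : ℕ, (((l + 1).factorial : ℂ))⁻¹ • (fun x => f * x - x * f)^[l] i := by
  rw [exp_eq_tsum ℂ, tsum_mul_tsum_eq_tsum_sum_antidiagonal_of_summable_norm
    (summable_norm_inv_factorial_smul_sum_pow_mul_pow f i) (norm_expSeries_summable' (-f))]
  exact tsum_congr (sum_antidiagonal_eq_inv_factorial_smul_iterate_mul_sub_mul f i)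
end
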